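/- Let X and U be real normed spaces, α > 0, and let ψ₁, ψ₂ : [0,∞) → [0,∞) be of class 𝒦∞ with ψ₁⁻¹ denoting the inverse of ψ₁. Let V : [0,∞) × X → [0,∞) satisfy ψ₁(‖x‖) ≤ V(t,x) ≤ ψ₂(‖x‖) for all (t,x) ∈ [0,∞) × X. Let s ≥ 0, T ∈ (s,∞], let x : [s,T) → X be any function and u : [s,T) → U be continuous, and suppose that h(t) := V(t, x(t)) is differentiable at every t ∈ [s,T) with h′(t) ≤ α‖u(t)‖². Then for every t ∈ [s,T): ‖x(t)‖ ≤ ψ₁⁻¹(2 ψ₂(‖x(s)‖)) + ψ₁⁻¹(2α ∫_s^t ‖u(τ)‖² dτ). -/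

import Mathlib

/-!
Along the trajectory, `V(t, x(t)) - V(s, x(s))` is at most `α ∫ₛᵗ ‖u‖²` (the derivative bound
integrated), so the sandwich bounds give `ψ₁(‖x(t)‖) ≤ ψ₂(‖x(s)‖) + α ∫ₛᵗ ‖u‖²`. A sum of two
nonnegative numbers is at most twice the larger one, and `ψ₁⁻¹` is monotone and nonnegative, which
yields the weak triangle inequality `ψ₁⁻¹(a + b) ≤ ψ₁⁻¹(2a) + ψ₁⁻¹(2b)`.
-/

/-- A function `ψ : [0,∞) → [0,∞)` is of class `𝒦∞` iff it is continuous,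
strictly increasing, unbounded and `ψ 0 = 0`. -/
def ClassKInfty (ψ : ℝ → ℝ) : Prop :=
  ContinuousOn ψ (Set.Ici 0) ∧ StrictMonoOn ψ (Set.Ici 0) ∧ ψ 0 = 0 ∧
    (∀ r : ℝ, 0 ≤ r → 0 ≤ ψ r) ∧ (∀ M : ℝ, ∃ r : ℝ, 0 ≤ r ∧ M ≤ ψ r)

open Set

namespace ClassKInfty

variable {ψ ψinv : ℝ → ℝ} {r M a b : ℝ}

theorem surjOn_Ici (hψ : ClassKInfty ψ) : SurjOn ψ (Ici 0) (Ici 0) := by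
  intro M hM
  obtain ⟨R, hR, hMR⟩ := hψ.2.2.2.2 M
  obtain ⟨r, hr, hrM⟩ := intermediate_value_Icc hR (hψ.1.mono fun y hy => hy.1)
    ⟨by rwa [hψ.2.2.1], hMR⟩
  exact ⟨r, hr.1, hrM⟩

theorem le_inv_iff (hψ : ClassKInfty ψ) (hinv : ∀ r, 0 ≤ r → ψinv (ψ r) = r)
    (hr : 0 ≤ r) (hM : 0 ≤ M) : r ≤ ψinv M ↔ ψ r ≤ M := by
  obtain ⟨r₀, hr₀, rfl⟩ := hψ.surjOn_Ici hM
  rw [hinv r₀ hr₀]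
  exact (hψ.2.1.le_iff_le hr hr₀).symm

theorem inv_nonneg (hψ : ClassKInfty ψ) (hinv : ∀ r, 0 ≤ r → ψinv (ψ r) = r) (hM : 0 ≤ M) :
    0 ≤ ψinv M :=
  (hψ.le_inv_iff hinv le_rfl hM).2 (by rwa [hψ.2.2.1])

theorem le_inv_two_mul_add_inv_two_mul (hψ : ClassKInfty ψ)
    (hinv : ∀ r, 0 ≤ r → ψinv (ψ r) = r) (hr : 0 ≤ r) (ha : 0 ≤ a) (hb : 0 ≤ b)
    (h : ψ r ≤ a + b) : r ≤ ψinv (2 * a) + ψinv (2 * b) := by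
  have ha' := hψ.inv_nonneg hinv (by positivity : 0 ≤ 2 * a)
  have hb' := hψ.inv_nonneg hinv (by positivity : 0 ≤ 2 * b)
  rcases le_total a b with hab | hab
  · have := (hψ.le_inv_iff hinv hr (by positivity : 0 ≤ 2 * b)).2 (by linarith)
    linarith
  · have := (hψ.le_inv_iff hinv hr (by positivity : 0 ≤ 2 * a)).2 (by linarith)
    linarith

end ClassKInfty

theorem sub_le_integral_of_hasDerivAt_le {h h' φ : ℝ → ℝ} {a b : ℝ} (hab : a ≤ b)
    (hφ : ContinuousOn φ (Icc a b))
    (hderiv : ∀ τ ∈ Icc a b, HasDerivAt h (h' τ) τ ∧ h' τ ≤ φ τ) :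
    h b - h a ≤ ∫ τ in a..b, φ τ :=
  intervalIntegral.sub_le_integral_of_hasDeriv_right_of_le hab
    (fun τ hτ => (hderiv τ hτ).1.continuousAt.continuousWithinAt)
    (fun τ hτ => (hderiv τ (Ioo_subset_Icc_self hτ)).1.hasDerivWithinAt)
    (hφ.integrableOn_compact isCompact_Icc)
    (fun τ hτ => (hderiv τ (Ioo_subset_Icc_self hτ)).2)

theorem uniform_global_stability_estimate_general
    {X U : Type*} [NormedAddCommGroup X]
    [NormedAddCommGroup U]
    (α : ℝ) (hα : 0 < α)
    (ψ₁ ψ₂ : ℝ → ℝ) (hψ₁ : ClassKInfty ψ₁)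
    (ψ₁inv : ℝ → ℝ)
    (hinv₁ : ∀ r : ℝ, 0 ≤ r → ψ₁inv (ψ₁ r) = r)
    (V : ℝ → X → ℝ)
    (hV : ∀ t : ℝ, 0 ≤ t → ∀ x : X, ψ₁ ‖x‖ ≤ V t x ∧ V t x ≤ ψ₂ ‖x‖)
    (s : ℝ) (hs : 0 ≤ s) (T : EReal)
    (x : ℝ → X) (u : ℝ → U)
    (hu : ContinuousOn u {τ : ℝ | s ≤ τ ∧ (τ : EReal) < T})
    (h' : ℝ → ℝ)
    (hderiv : ∀ t : ℝ, s ≤ t → (t : EReal) < T →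
      HasDerivAt (fun τ => V τ (x τ)) (h' t) t ∧ h' t ≤ α * ‖u t‖ ^ 2) :
    ∀ t : ℝ, s ≤ t → (t : EReal) < T →
      ‖x t‖ ≤ ψ₁inv (2 * ψ₂ ‖x s‖) + ψ₁inv (2 * α * ∫ τ in s..t, ‖u τ‖ ^ 2) := by
  intro t hst htT
  have hIcc : Icc s t ⊆ {τ : ℝ | s ≤ τ ∧ (τ : EReal) < T} := fun τ hτ =>
    ⟨hτ.1, (EReal.coe_le_coe_iff.2 hτ.2).trans_lt htT⟩
  have hdiss : V t (x t) - V s (x s) ≤ α * ∫ τ in s..t, ‖u τ‖ ^ 2 := by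
    rw [← intervalIntegral.integral_const_mul]
    exact sub_le_integral_of_hasDerivAt_le hst
      (continuousOn_const.mul ((hu.mono hIcc).norm.pow 2))
      (fun τ hτ => hderiv τ (hIcc hτ).1 (hIcc hτ).2)
  have hVt := hV t (hs.trans hst) (x t)
  have hVs := hV s hs (x s)
  have hψ₂ : 0 ≤ ψ₂ ‖x s‖ := (hψ₁.2.2.2.1 _ (norm_nonneg _)).trans (hVs.1.trans hVs.2)
  have hI : 0 ≤ α * ∫ τ in s..t, ‖u τ‖ ^ 2 :=
    mul_nonneg hα.le (intervalIntegral.integral_nonneg hst fun τ _ => by positivity)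
  rw [mul_assoc]
  exact hψ₁.le_inv_two_mul_add_inv_two_mul hinv₁ (norm_nonneg _) hψ₂ hI (by linarith)

/-- Uniform global stability estimate (first step of the proofs of Lemmas 3.3 and 4.3):
if `V` is sandwiched between `ψ₁(‖·‖)` and `ψ₂(‖·‖)` and `t ↦ V(t,x(t))` dissipates with rate
at most `α‖u(t)‖²` on `[s,T)`, then `‖x(t)‖ ≤ ψ₁⁻¹(2ψ₂(‖x(s)‖)) + ψ₁⁻¹(2α∫ₛᵗ‖u‖²)`. -/
theorem uniform_global_stability_estimate
    {X U : Type*} [NormedAddCommGroup X] [NormedSpace ℝ X]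
    [NormedAddCommGroup U] [NormedSpace ℝ U]
    (α : ℝ) (hα : 0 < α)
    (ψ₁ ψ₂ : ℝ → ℝ) (hψ₁ : ClassKInfty ψ₁) (hψ₂ : ClassKInfty ψ₂)
    (ψ₁inv : ℝ → ℝ)
    (hinv₁ : ∀ r : ℝ, 0 ≤ r → ψ₁inv (ψ₁ r) = r)
    (hinv₂ : ∀ r : ℝ, 0 ≤ r → ψ₁ (ψ₁inv r) = r)
    (V : ℝ → X → ℝ)
    (hV : ∀ t : ℝ, 0 ≤ t → ∀ x : X, ψ₁ ‖x‖ ≤ V t x ∧ V t x ≤ ψ₂ ‖x‖)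
    (s : ℝ) (hs : 0 ≤ s) (T : EReal) (hsT : (s : EReal) < T)
    (x : ℝ → X) (u : ℝ → U)
    (hu : ContinuousOn u {τ : ℝ | s ≤ τ ∧ (τ : EReal) < T})
    (h' : ℝ → ℝ)
    (hderiv : ∀ t : ℝ, s ≤ t → (t : EReal) < T →
      HasDerivAt (fun τ => V τ (x τ)) (h' t) t ∧ h' t ≤ α * ‖u t‖ ^ 2) :
    ∀ t : ℝ, s ≤ t → (t : EReal) < T →
      ‖x t‖ ≤ ψ₁inv (2 * ψ₂ ‖x s‖) + ψ₁inv (2 * α * ∫ τ in s..t, ‖u τ‖ ^ 2) :=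
  uniform_global_stability_estimate_general α hα ψ₁ ψ₂ hψ₁ ψ₁inv hinv₁ V hV s hs T x u hu h' hderiv
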